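/- arXiv:1010.3113 — 3 statements merged into one kernel-verified Lean document; each statement's English description precedes it below -/
import Mathlib

section
/- Let p(τ) = τ³ + t a₁ τ² − t a₂ τ + t² a₃ with a₂ ≥ c > 0 and let λₖ(t), k = 1,2,3, be its three real roots for small t > 0, given in the trigonometric form. Define δₖ(t) = p'(λₖ(t)) = 3λₖ² + 2 t a₁ λₖ − t a₂. Then there exist constants γ > 0 and γ₁ > 0 such that |δₖ(t)| ≥ γ t a₂ ≥ γ c t for all 0 ≤ t ≤ γ₁ and k = 1, 2, 3. -/
open Real Filter Topology

/-- Lemma 2 of the paper at a fixed frequency: for the roots λₖ of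
τ³ + t a₁ τ² − t a₂ τ + t² a₃ given in trigonometric form, the quantities
δₖ = 3λₖ² + 2 t a₁ λₖ − t a₂ satisfy |δₖ| ≥ γ t a₂ ≥ γ c t for small t ≥ 0. -/
theorem delta_k_lower_bound (a₁ a₂ a₃ c : ℝ) (hc : 0 < c) (ha₂ : a₂ ≥ c)
    (q r ρ θ : ℝ → ℝ) (lam : Fin 3 → ℝ → ℝ) (δ : Fin 3 → ℝ → ℝ)
    (hq : ∀ t, q t = (-3 * t * a₂ - t ^ 2 * a₁ ^ 2) / 9)
    (hr : ∀ t, r t = (-9 * t ^ 2 * a₁ * a₂ - 27 * t ^ 2 * a₃ - 2 * t ^ 3 * a₁ ^ 3) / 54)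
    (hρ : ∀ t, ρ t = (-(q t)) ^ ((3 : ℝ) / 2))
    (hθ : ∀ t, θ t = Real.arccos (r t / ρ t))
    (hlam : ∀ k : Fin 3, ∀ t,
      lam k t = 2 * (ρ t) ^ ((1 : ℝ) / 3) * Real.cos (θ t / 3 + 2 * π * (k : ℝ) / 3)
        - t * a₁ / 3)
    (hδ : ∀ k : Fin 3, ∀ t,
      δ k t = 3 * (lam k t) ^ 2 + 2 * t * a₁ * (lam k t) - t * a₂) :
    ∃ γ > (0 : ℝ), ∃ γ₁ > (0 : ℝ), ∀ t : ℝ, 0 ≤ t → t ≤ γ₁ → ∀ k : Fin 3,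
      |δ k t| ≥ γ * t * a₂ ∧ γ * t * a₂ ≥ γ * c * t := by
  have ha₂pos : 0 < a₂ := lt_of_lt_of_le hc ha₂
  set A : ℝ → ℝ := fun t => (3 * a₂ + t * a₁ ^ 2) / 9 with hA
  set B : ℝ → ℝ := fun t => (-9 * a₁ * a₂ - 27 * a₃ - 2 * t * a₁ ^ 3) / 54 with hB
  have hApos : ∀ t : ℝ, 0 ≤ t → 0 < A t := by
    intro t ht
    have h1 : 0 < 3 * a₂ + t * a₁ ^ 2 := by nlinarith [mul_nonneg ht (sq_nonneg a₁)]
    simp only [hA]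
    positivity
  have hqA : ∀ t, -(q t) = t * A t := by
    intro t; rw [hq]; simp only [hA]; ring
  -- ρ^{1/3} = √t * √(A t)
  have hρ13 : ∀ t : ℝ, 0 ≤ t → (ρ t) ^ ((1 : ℝ) / 3) = Real.sqrt t * Real.sqrt (A t) := by
    intro t ht
    have hA' : (0:ℝ) ≤ A t := (hApos t ht).le
    have h1 : (0:ℝ) ≤ t * A t := mul_nonneg ht hA'
    rw [hρ, hqA, ← Real.rpow_mul h1,
      show ((3:ℝ)/2 * (1/3) : ℝ) = 1/2 by norm_num, ← Real.sqrt_eq_rpow,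
      Real.sqrt_mul ht]
  -- r/ρ on (0,∞)
  have hrρ : ∀ t : ℝ, 0 < t → r t / ρ t = Real.sqrt t * B t / (A t) ^ ((3:ℝ)/2) := by
    intro t ht
    have hA' : (0:ℝ) ≤ A t := (hApos t ht.le).le
    have hρ' : ρ t = t ^ ((3:ℝ)/2) * (A t) ^ ((3:ℝ)/2) := by
      rw [hρ, hqA, Real.mul_rpow ht.le hA']
    have hr' : r t = t ^ 2 * B t := by rw [hr]; simp only [hB]; ring
    have ht32 : t ^ ((3:ℝ)/2) = t * Real.sqrt t := by
      rw [show (3:ℝ)/2 = 1 + 1/2 by norm_num, Real.rpow_add ht, Real.rpow_one,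
        ← Real.sqrt_eq_rpow]
    have hA32 : 0 < (A t) ^ ((3:ℝ)/2) := Real.rpow_pos_of_pos (hApos t ht.le) _
    have hsp : 0 < Real.sqrt t := Real.sqrt_pos.mpr ht
    have hst : Real.sqrt t * Real.sqrt t = t := Real.mul_self_sqrt ht.le
    rw [hρ', hr', ht32]
    rw [div_eq_div_iff (by positivity) (ne_of_gt hA32)]
    linear_combination (-(B t) * (A t) ^ ((3:ℝ)/2) * t) * hst
  -- G and F
  set G : Fin 3 → ℝ → ℝ := fun k t =>
    2 * Real.sqrt (A t) * Real.cos (θ t / 3 + 2 * π * (k : ℝ) / 3) - Real.sqrt t * a₁ / 3 with hG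
  set F : Fin 3 → ℝ → ℝ := fun k t =>
    (3 * (G k t) ^ 2 + 2 * Real.sqrt t * a₁ * (G k t) - a₂) / a₂ with hF
  have hlamG : ∀ k, ∀ t : ℝ, 0 ≤ t → lam k t = Real.sqrt t * G k t := by
    intro k t ht
    have hst : Real.sqrt t * Real.sqrt t = t := Real.mul_self_sqrt ht
    rw [hlam, hρ13 t ht]; simp only [hG]
    linear_combination (a₁ / 3) * hst
  have hδF : ∀ k, ∀ t : ℝ, 0 ≤ t → δ k t = (t * a₂) * F k t := by
    intro k t ht
    have hst : Real.sqrt t * Real.sqrt t = t := Real.mul_self_sqrt ht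
    rw [hδ, hlamG k t ht]; simp only [hF]
    have hdiv : (t * a₂) * ((3 * (G k t) ^ 2 + 2 * Real.sqrt t * a₁ * (G k t) - a₂) / a₂)
        = t * (3 * (G k t) ^ 2 + 2 * Real.sqrt t * a₁ * (G k t) - a₂) := by
      field_simp
    rw [hdiv]
    linear_combination (3 * (G k t) ^ 2) * hst
  -- limits
  have hsqrt0 : Tendsto (fun t : ℝ => Real.sqrt t) (nhdsWithin 0 (Set.Ioi 0)) (nhds 0) := by
    have := Real.continuous_sqrt.tendsto 0
    simpa using tendsto_nhdsWithin_of_tendsto_nhds this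
  have hAt : Tendsto A (nhdsWithin 0 (Set.Ioi 0)) (nhds (a₂ / 3)) := by
    apply tendsto_nhdsWithin_of_tendsto_nhds
    have hcont : Continuous A :=
      (continuous_const.add (continuous_id.mul continuous_const)).div_const 9
    have h0 : A 0 = a₂ / 3 := by simp only [hA]; ring
    simpa [h0] using hcont.tendsto 0
  have hBt : Tendsto B (nhdsWithin 0 (Set.Ioi 0)) (nhds (B 0)) := by
    apply tendsto_nhdsWithin_of_tendsto_nhds
    have hcont : Continuous B :=
      (continuous_const.sub ((continuous_const.mul continuous_id).mul continuous_const)).div_const 54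
    exact hcont.tendsto 0
  have hθt : Tendsto θ (nhdsWithin 0 (Set.Ioi 0)) (nhds (π / 2)) := by
    have hden : Tendsto (fun t => (A t) ^ ((3:ℝ)/2)) (nhdsWithin 0 (Set.Ioi 0))
        (nhds ((a₂/3) ^ ((3:ℝ)/2))) :=
      (Real.continuousAt_rpow_const _ _ (Or.inr (by norm_num))).tendsto.comp hAt
    have hdnz : ((a₂/3) : ℝ) ^ ((3:ℝ)/2) ≠ 0 :=
      ne_of_gt (Real.rpow_pos_of_pos (by positivity) _)
    have harg : Tendsto (fun t => Real.sqrt t * B t / (A t) ^ ((3:ℝ)/2))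
        (nhdsWithin 0 (Set.Ioi 0)) (nhds 0) := by
      have := (hsqrt0.mul hBt).div hden hdnz
      rw [zero_mul, zero_div] at this; exact this
    have harccos : Tendsto (fun t => Real.arccos (Real.sqrt t * B t / (A t) ^ ((3:ℝ)/2)))
        (nhdsWithin 0 (Set.Ioi 0)) (nhds (π/2)) := by
      have := (Real.continuous_arccos.tendsto 0).comp harg
      rw [Real.arccos_zero] at this; exact this
    apply harccos.congr'
    filter_upwards [self_mem_nhdsWithin] with t ht'
    rw [hθ, hrρ t ht']
  have hGt : ∀ k : Fin 3, Tendsto (G k) (nhdsWithin 0 (Set.Ioi 0))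
      (nhds (2 * Real.sqrt (a₂/3) * Real.cos (π/6 + 2*π*(k:ℝ)/3))) := by
    intro k
    have hphi : Tendsto (fun t => θ t / 3 + 2*π*(k:ℝ)/3) (nhdsWithin 0 (Set.Ioi 0))
        (nhds (π/6 + 2*π*(k:ℝ)/3)) := by
      have := (hθt.div_const 3).add (tendsto_const_nhds (x := 2*π*(k:ℝ)/3))
      simpa [show π/2/3 = π/6 by ring] using this
    have h1 : Tendsto (fun t => 2 * Real.sqrt (A t) * Real.cos (θ t / 3 + 2*π*(k:ℝ)/3))
        (nhdsWithin 0 (Set.Ioi 0)) (nhds (2 * Real.sqrt (a₂/3) * Real.cos (π/6 + 2*π*(k:ℝ)/3))) :=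
      (tendsto_const_nhds.mul ((Real.continuous_sqrt.tendsto _).comp hAt)).mul
        ((Real.continuous_cos.tendsto _).comp hphi)
    have h2 : Tendsto (fun t => Real.sqrt t * a₁ / 3) (nhdsWithin 0 (Set.Ioi 0)) (nhds 0) := by
      have := (hsqrt0.mul (tendsto_const_nhds (x := a₁))).div_const 3
      simpa using this
    simpa only [hG, sub_zero] using h1.sub h2
  have hFt : ∀ k : Fin 3, Tendsto (F k) (nhdsWithin 0 (Set.Ioi 0))
      (nhds ((3 * (2 * Real.sqrt (a₂/3) * Real.cos (π/6 + 2*π*(k:ℝ)/3)) ^ 2 - a₂) / a₂)) := by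
    intro k
    have h2 : Tendsto (fun t => 2 * Real.sqrt t * a₁ * (G k t)) (nhdsWithin 0 (Set.Ioi 0))
        (nhds 0) := by
      have h := ((hsqrt0.mul (hGt k)).const_mul (2 * a₁))
      have heq : ∀ t : ℝ, (2 * a₁) * (Real.sqrt t * G k t) = 2 * Real.sqrt t * a₁ * (G k t) := by
        intro t; ring
      simpa [heq] using h.congr heq
    have hnum : Tendsto (fun t => 3 * (G k t) ^ 2 + 2 * Real.sqrt t * a₁ * (G k t) - a₂)
        (nhdsWithin 0 (Set.Ioi 0))
        (nhds (3 * (2 * Real.sqrt (a₂/3) * Real.cos (π/6 + 2*π*(k:ℝ)/3)) ^ 2 + 0 - a₂)) :=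
      ((((hGt k).pow 2).const_mul 3).add h2).sub tendsto_const_nhds
    have := hnum.div_const a₂
    simpa only [hF, add_zero] using this
  have hL : ∀ k : Fin 3,
      1 ≤ |(3 * (2 * Real.sqrt (a₂/3) * Real.cos (π/6 + 2*π*(k:ℝ)/3)) ^ 2 - a₂) / a₂| := by
    have hs3 : Real.sqrt 3 ^ 2 = 3 := Real.sq_sqrt (by norm_num)
    have hsA : Real.sqrt (a₂/3) ^ 2 = a₂/3 := Real.sq_sqrt (by positivity)
    intro k
    have h3 : (0:ℝ) < Real.sqrt 3 := by positivity
    fin_cases k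
    · norm_num
      have e : 2 * (Real.sqrt a₂ / Real.sqrt 3) * (Real.sqrt 3 / 2) = Real.sqrt a₂ := by
        field_simp
      rw [e, Real.sq_sqrt ha₂pos.le, show (3 * a₂ - a₂) / a₂ = 2 by field_simp; ring]
      norm_num
    · norm_num
      rw [show π/6 + 2*π/3 = π - π/6 by ring, Real.cos_pi_sub, Real.cos_pi_div_six]
      have e : 2 * (Real.sqrt a₂ / Real.sqrt 3) * -(Real.sqrt 3 / 2) = -Real.sqrt a₂ := by
        field_simp
      rw [e, neg_sq, Real.sq_sqrt ha₂pos.le, show (3 * a₂ - a₂) / a₂ = 2 by field_simp; ring]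
      norm_num
    · norm_num
      rw [show π/6 + 2*π*2/3 = π + π/2 by ring]
      simp [Real.cos_add]
      rw [show -a₂ / a₂ = -1 by field_simp]
      norm_num
  have hev : ∀ᶠ t in nhdsWithin 0 (Set.Ioi 0), ∀ k : Fin 3, 1/2 ≤ |F k t| := by
    rw [eventually_all]
    intro k
    have hopen : IsOpen {x : ℝ | 1/2 < |x|} := isOpen_lt continuous_const continuous_abs
    have hmem : (3 * (2 * Real.sqrt (a₂/3) * Real.cos (π/6 + 2*π*(k:ℝ)/3)) ^ 2 - a₂) / a₂
        ∈ {x : ℝ | 1/2 < |x|} := by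
      simp only [Set.mem_setOf_eq]; linarith [hL k]
    filter_upwards [(hFt k).eventually (hopen.mem_nhds hmem)] with t ht
    exact le_of_lt ht
  rw [eventually_nhdsWithin_iff, Metric.eventually_nhds_iff] at hev
  obtain ⟨ε, hε, hevε⟩ := hev
  refine ⟨1/2, by norm_num, ε/2, by positivity, ?_⟩
  intro t ht htε k
  constructor
  · rcases eq_or_lt_of_le ht with h0 | h0
    · rw [← h0]
      simpa using abs_nonneg (δ k 0)
    · have hmem : t ∈ Set.Ioi (0:ℝ) := h0
      have hdist : dist t 0 < ε := by
        rw [Real.dist_eq, sub_zero, abs_of_pos h0]; linarith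
      have hFk := hevε hdist hmem k
      have hδ' := hδF k t ht
      have hta : 0 < t * a₂ := mul_pos h0 ha₂pos
      calc |δ k t| = (t * a₂) * |F k t| := by rw [hδ', abs_mul, abs_of_pos hta]
        _ ≥ (t * a₂) * (1/2) := by nlinarith
        _ = 1/2 * t * a₂ := by ring
  · nlinarith
end

section
/- Define f(t, A) = t + (1 + A)^{−1/3} for t ≥ 0, A ≥ 0. Then there exists α > 0 such that for every integer N ≥ 0, all t ≥ 0 and A ≥ 0: f(t,A)^{−2N−5} + f(t,A)^{−2N−3} t A ≥ α f(t,A)^{−2N−2} A. -/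
open Real

/-- The weight function f(t,A) = t + (1+A)^{-1/3}. -/
noncomputable def wf (t A : ℝ) : ℝ := t + (1 + A) ^ (-(1 : ℝ) / 3)

/-- The second absorption inequality: f^{-2N-5} + f^{-2N-3} t A ≥ α f^{-2N-2} A. -/
theorem weight_absorption_two :
    ∃ α > (0 : ℝ), ∀ N : ℕ, ∀ t A : ℝ, 0 ≤ t → 0 ≤ A →
      1 / (wf t A) ^ (2 * N + 5) + t * A / (wf t A) ^ (2 * N + 3) ≥
        α * A / (wf t A) ^ (2 * N + 2) := by
  refine ⟨1/4, by norm_num, ?_⟩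
  intro N t A ht hA
  have h1A : (0:ℝ) < 1 + A := by linarith
  set g : ℝ := (1 + A) ^ (-(1 : ℝ) / 3) with hgdef
  have hg : 0 < g := Real.rpow_pos_of_pos h1A _
  have hf : 0 < wf t A := by unfold wf; linarith
  set f := wf t A with hfdef
  have hfeq : f = t + g := rfl
  have hg3 : g ^ 3 = 1 / (1 + A) := by
    rw [hgdef, ← Real.rpow_natCast ((1+A) ^ (-(1:ℝ)/3)) 3, ← Real.rpow_mul h1A.le]
    norm_num [Real.rpow_neg_one]
  have key : 1/4 * A * f ^ 3 ≤ 1 + t * A * f ^ 2 := by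
    rcases le_or_gt g (3 * t) with hcase | hcase
    · -- f ≤ 4t
      have h4 : f ≤ 4 * t := by rw [hfeq]; linarith
      have : A * f ^ 2 * f ≤ A * f ^ 2 * (4 * t) :=
        mul_le_mul_of_nonneg_left h4 (mul_nonneg hA (sq_nonneg f))
      nlinarith [mul_nonneg (mul_nonneg ht hA) (sq_nonneg f)]
    · -- f ≤ 4g/3
      have h4 : f ≤ 4/3 * g := by rw [hfeq]; linarith
      have hcube : f ^ 3 ≤ (4/3 * g) ^ 3 := pow_le_pow_left₀ hf.le h4 3
      have hAg : A * g ^ 3 ≤ 1 := by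
        rw [hg3]
        rw [mul_one_div, div_le_one h1A]
        linarith
      have htA : 0 ≤ t * A * f ^ 2 := mul_nonneg (mul_nonneg ht hA) (sq_nonneg f)
      nlinarith [mul_le_mul_of_nonneg_left hcube hA]
  have h5 : f ^ (2*N+5) = f ^ (2*N+2) * f ^ 3 := by ring
  have h3 : f ^ (2*N+5) = f ^ (2*N+3) * f ^ 2 := by ring
  have hp5 : (0:ℝ) < f ^ (2*N+5) := pow_pos hf _
  rw [ge_iff_le]
  calc 1/4 * A / f ^ (2*N+2)
      = (1/4 * A * f ^ 3) / f ^ (2*N+5) := by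
        rw [h5, mul_div_mul_right _ _ (ne_of_gt (pow_pos hf 3))]
    _ ≤ (1 + t * A * f ^ 2) / f ^ (2*N+5) := by gcongr
    _ = 1 / f ^ (2*N+5) + t * A / f ^ (2*N+3) := by
        rw [add_div, h3, mul_div_mul_right _ _ (ne_of_gt (pow_pos hf 2))]
end

section
/- Let P(τ) = τ³ + q₁ τ² + q₂ τ + q₃ be a real cubic depending smoothly on a parameter t ∈ [0, T] (with q_j = q_j(t) smooth), such that for every t ∈ [0,T] all roots of P are real, and such that at t = 0 the cubic has the triple root τ = 0. Then q₁(0) = q₂(0) = q₃(0) = 0 and q₃'(0) = 0. -/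
open Polynomial in
/-- If every complex root of the monic real cubic `z³ + pz² + qz + r` is real,
then there is a real root `a` such that the quadratic cofactor
`z² + (p+a)z + (q+pa+a²)` has nonnegative discriminant. -/
lemma cubic_real_root_disc (p q r : ℝ)
    (h : ∀ z : ℂ, z ^ 3 + (p:ℂ) * z ^ 2 + (q:ℂ) * z + (r:ℂ) = 0 → z.im = 0) :
    ∃ a : ℝ, a^3 + p*a^2 + q*a + r = 0 ∧ 4*(q + p*a + a^2) ≤ (p + a)^2 := by
  have hdeg : (0 : WithBot ℕ) < ((X^3 + C (p:ℂ) * X^2 + C (q:ℂ) * X + C (r:ℂ)) : ℂ[X]).degree := by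
    have : ((X^3 + C (p:ℂ) * X^2 + C (q:ℂ) * X + C (r:ℂ)) : ℂ[X]).degree = 3 := by
      compute_degree!
    rw [this]; norm_num
  obtain ⟨z, hz⟩ := Complex.exists_root hdeg
  have hz' : z ^ 3 + (p:ℂ) * z ^ 2 + (q:ℂ) * z + (r:ℂ) = 0 := by
    have := hz
    simp [Polynomial.IsRoot, Polynomial.eval_add, Polynomial.eval_mul, Polynomial.eval_pow] at this
    linear_combination this
  have him := h z hz'
  have hza : z = ((z.re : ℝ) : ℂ) := by
    apply Complex.ext <;> simp [him]
  set a : ℝ := z.re with ha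
  rw [hza] at hz'
  have hroot : a^3 + p*a^2 + q*a + r = 0 := by exact_mod_cast hz'
  refine ⟨a, hroot, ?_⟩
  by_contra hlt
  push_neg at hlt
  have hpos : 0 < 4*(q + p*a + a^2) - (p + a)^2 := by linarith
  set s : ℝ := Real.sqrt (4*(q + p*a + a^2) - (p + a)^2) with hs
  have hs2 : s^2 = 4*(q + p*a + a^2) - (p + a)^2 := Real.sq_sqrt hpos.le
  have hspos : 0 < s := Real.sqrt_pos.mpr hpos
  have hs2' : ((s:ℂ))^2 = 4*((q:ℂ) + p*a + (a:ℂ)^2) - ((p:ℂ) + a)^2 := by exact_mod_cast hs2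
  set ζ : ℂ := -((p:ℂ) + a)/2 + (s:ℂ)/2 * Complex.I with hζ
  have hquad : ζ^2 + ((p:ℂ) + a)*ζ + ((q:ℂ) + p*a + (a:ℂ)^2) = 0 := by
    rw [hζ]
    linear_combination (-(1:ℂ)/4) * hs2' + ((1:ℂ)/4) * (s:ℂ)^2 * Complex.I_sq
  have hcubic : ζ ^ 3 + (p:ℂ) * ζ ^ 2 + (q:ℂ) * ζ + (r:ℂ) = 0 := by
    have hid : ζ ^ 3 + (p:ℂ) * ζ ^ 2 + (q:ℂ) * ζ + (r:ℂ)
        = (ζ - (a:ℂ)) * (ζ^2 + ((p:ℂ) + a)*ζ + ((q:ℂ) + p*a + (a:ℂ)^2))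
          + ((a:ℂ)^3 + (p:ℂ)*(a:ℂ)^2 + (q:ℂ)*(a:ℂ) + (r:ℂ)) := by ring
    have h0 : (a:ℂ)^3 + (p:ℂ)*(a:ℂ)^2 + (q:ℂ)*(a:ℂ) + (r:ℂ) = 0 := by exact_mod_cast hroot
    rw [hid, hquad, h0]; ring
  have := h ζ hcubic
  rw [hζ] at this
  simp at this
  linarith

/-- The elementary numeric contradiction used in the proof of Lemma 1. -/
lemma numeric_contradiction (K t u ε : ℝ) (hK : 1 ≤ K) (ht : 0 < t)
    (ht1 : 2*K*t ≤ 1) (ht2 : 200*K^6*t ≤ ε^2) (hε : 0 < ε) (hu : 0 ≤ u)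
    (hA : ε*t ≤ u^3 + K*t*u^2 + K*t*u)
    (hB : 3*u^2 ≤ K^2*t^2 + 2*K*t*u + 4*K*t) : False := by
  have hK0 : (0:ℝ) < K := lt_of_lt_of_le zero_lt_one hK
  have h1 : u^2 ≤ 3*K^2*t := by
    nlinarith [mul_nonneg (mul_nonneg hK0.le ht.le) (sq_nonneg (u-1)),
      mul_nonneg (mul_nonneg (sub_nonneg.mpr ht1) (sq_nonneg u)) (by norm_num : (0:ℝ) ≤ 1),
      mul_nonneg ht.le (mul_nonneg hK0.le (sub_nonneg.mpr hK)),
      mul_nonneg (sub_nonneg.mpr ht1) (sq_nonneg u),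
      mul_nonneg (sub_nonneg.mpr ht1) (mul_nonneg hK0.le ht.le)]
  have h2 : u ≤ 2*K := by
    nlinarith [sq_nonneg (u - 2*K), mul_le_mul_of_nonneg_left ht1 (mul_nonneg hK0.le hK0.le)]
  have h3 : ε ≤ 6*K^2*u := by
    nlinarith [mul_le_mul_of_nonneg_left h1 hu,
      mul_le_mul_of_nonneg_left h2 (mul_nonneg (mul_nonneg hK0.le ht.le) hu),
      mul_nonneg (mul_nonneg (mul_nonneg (sub_nonneg.mpr hK) hK0.le) ht.le) hu]
  nlinarith [mul_self_le_mul_self hε.le h3,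
    mul_le_mul_of_nonneg_left h1 (by positivity : (0:ℝ) ≤ 36*K^4)]

/-- A smooth function vanishing at 0 is eventually dominated by `x ↦ x·f'(0)` up to `ε|x|`. -/
lemma eventually_deriv_bound (f : ℝ → ℝ) (hf : ContDiff ℝ (⊤ : ℕ∞) f) (hf0 : f 0 = 0)
    (ε : ℝ) (hε : 0 < ε) :
    ∀ᶠ x in nhds (0:ℝ), |f x - x * deriv f 0| ≤ ε * |x| := by
  have hd : HasDerivAt f (deriv f 0) 0 := (hf.differentiable (by simp) 0).hasDerivAt
  have h := (hasDerivAt_iff_isLittleO.mp hd).def hε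
  filter_upwards [h] with x hx
  simpa [hf0, Real.norm_eq_abs, mul_comm] using hx

set_option maxHeartbeats 1000000 in
/-- One-parameter version of Lemma 1: if the monic real cubic
τ³ + q₁(t)τ² + q₂(t)τ + q₃(t) has only real roots for every t ∈ [0,T] and has
the triple root τ = 0 at t = 0, then q₁(0) = q₂(0) = q₃(0) = 0 and q₃'(0) = 0. -/
theorem lemma1_one_parameter (T : ℝ) (hT : 0 < T) (q₁ q₂ q₃ : ℝ → ℝ)
    (hq₁ : ContDiff ℝ (⊤ : ℕ∞) q₁) (hq₂ : ContDiff ℝ (⊤ : ℕ∞) q₂) (hq₃ : ContDiff ℝ (⊤ : ℕ∞) q₃)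
    (hreal : ∀ t ∈ Set.Icc (0 : ℝ) T, ∀ z : ℂ,
      z ^ 3 + (q₁ t : ℂ) * z ^ 2 + (q₂ t : ℂ) * z + (q₃ t : ℂ) = 0 → z.im = 0)
    (htriple : ∀ τ : ℝ,
      τ ^ 3 + q₁ 0 * τ ^ 2 + q₂ 0 * τ + q₃ 0 = τ ^ 3) :
    q₁ 0 = 0 ∧ q₂ 0 = 0 ∧ q₃ 0 = 0 ∧ deriv q₃ 0 = 0 := by
  have e1 := htriple 1
  have e2 := htriple (-1)
  have e3 := htriple 2
  norm_num at e1 e2 e3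
  have hq10 : q₁ 0 = 0 := by linarith
  have hq20 : q₂ 0 = 0 := by linarith
  have hq30 : q₃ 0 = 0 := by linarith
  refine ⟨hq10, hq20, hq30, ?_⟩
  by_contra hc
  set c : ℝ := deriv q₃ 0 with hcdef
  have hcpos : 0 < |c| := abs_pos.mpr hc
  set ε : ℝ := |c|/2 with hεdef
  have hεpos : 0 < ε := by positivity
  -- eventual bounds from differentiability
  have hev := ((eventually_deriv_bound q₁ hq₁ hq10 1 one_pos).and
    ((eventually_deriv_bound q₂ hq₂ hq20 1 one_pos).and
      (eventually_deriv_bound q₃ hq₃ hq30 ε hεpos)))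
  rw [Metric.eventually_nhds_iff] at hev
  obtain ⟨δ, hδ, hball⟩ := hev
  set K : ℝ := max 1 (max (|deriv q₁ 0| + 1) (|deriv q₂ 0| + 1)) with hKdef
  have hK1 : (1:ℝ) ≤ K := le_max_left _ _
  have hK0 : (0:ℝ) < K := lt_of_lt_of_le zero_lt_one hK1
  have hKA : |deriv q₁ 0| + 1 ≤ K := le_trans (le_max_left _ _) (le_max_right _ _)
  have hKB : |deriv q₂ 0| + 1 ≤ K := le_trans (le_max_right _ _) (le_max_right _ _)
  -- choose a small parameter value t
  set t : ℝ := min T (min (δ/2) (min (1/(2*K)) (ε^2/(200*K^6)))) with htdef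
  have ht0 : 0 < t := by
    apply lt_min hT
    apply lt_min (by positivity)
    exact lt_min (by positivity) (by positivity)
  have htT : t ≤ T := min_le_left _ _
  have htδ : t < δ := by
    have : t ≤ δ/2 := le_trans (min_le_right _ _) (min_le_left _ _)
    linarith
  have ht1 : 2*K*t ≤ 1 := by
    have h : t ≤ 1/(2*K) :=
      le_trans (min_le_right _ _) (le_trans (min_le_right _ _) (min_le_left _ _))
    have := (le_div_iff₀ (by positivity : (0:ℝ) < 2*K)).mp h
    linarith
  have ht2 : 200*K^6*t ≤ ε^2 := by
    have h : t ≤ ε^2/(200*K^6) :=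
      le_trans (min_le_right _ _) (le_trans (min_le_right _ _) (min_le_right _ _))
    have := (le_div_iff₀ (by positivity : (0:ℝ) < 200*K^6)).mp h
    linarith
  -- bounds at t
  have hdist : dist t 0 < δ := by
    rw [Real.dist_eq, sub_zero, abs_of_pos ht0]; exact htδ
  obtain ⟨b1, b2, b3⟩ := hball hdist
  have habs_t : |t| = t := abs_of_pos ht0
  rw [habs_t] at b1 b2 b3
  have hp : |q₁ t| ≤ K * t := by
    have h := abs_add_le (q₁ t - t * deriv q₁ 0) (t * deriv q₁ 0)
    rw [sub_add_cancel] at h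
    have h2 : |t * deriv q₁ 0| = t * |deriv q₁ 0| := by
      rw [abs_mul, habs_t]
    nlinarith [abs_nonneg (deriv q₁ 0)]
  have hq : |q₂ t| ≤ K * t := by
    have h := abs_add_le (q₂ t - t * deriv q₂ 0) (t * deriv q₂ 0)
    rw [sub_add_cancel] at h
    have h2 : |t * deriv q₂ 0| = t * |deriv q₂ 0| := by
      rw [abs_mul, habs_t]
    nlinarith [abs_nonneg (deriv q₂ 0)]
  have hr : ε * t ≤ |q₃ t| := by
    have h := abs_sub_abs_le_abs_sub (t*c) (q₃ t)
    rw [abs_sub_comm] at h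
    have h2 : |t * c| = t * |c| := by rw [abs_mul, habs_t]
    have h3 : |q₃ t - t * c| ≤ ε * t := b3
    nlinarith
  -- real root with nonnegative quadratic discriminant
  obtain ⟨a, ha, hdisc⟩ := cubic_real_root_disc (q₁ t) (q₂ t) (q₃ t)
    (hreal t ⟨ht0.le, htT⟩)
  set u : ℝ := |a| with hudef
  have hu0 : 0 ≤ u := abs_nonneg a
  -- inequality (A)
  have hA : ε * t ≤ u^3 + K*t*u^2 + K*t*u := by
    have hq3eq : q₃ t = -(a^3 + q₁ t * a^2 + q₂ t * a) := by linarith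
    have habs : |q₃ t| = |a^3 + q₁ t * a^2 + q₂ t * a| := by rw [hq3eq, abs_neg]
    have tri1 := abs_add_le (a^3 + q₁ t * a^2) (q₂ t * a)
    have tri2 := abs_add_le (a^3) (q₁ t * a^2)
    have f1 : |a^3| = u^3 := by rw [hudef, abs_pow]
    have f2 : |q₁ t * a^2| = |q₁ t| * u^2 := by rw [abs_mul, hudef, abs_pow]
    have f3 : |q₂ t * a| = |q₂ t| * u := by rw [abs_mul, hudef]
    have g2 : |q₁ t| * u^2 ≤ K*t * u^2 :=
      mul_le_mul_of_nonneg_right hp (by positivity)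
    have g3 : |q₂ t| * u ≤ K*t * u := mul_le_mul_of_nonneg_right hq hu0
    calc ε * t ≤ |q₃ t| := hr
      _ = |a^3 + q₁ t * a^2 + q₂ t * a| := habs
      _ ≤ |a^3| + |q₁ t * a^2| + |q₂ t * a| := by linarith
      _ ≤ u^3 + K*t*u^2 + K*t*u := by rw [f1, f2, f3]; linarith
  -- inequality (B)
  have hB : 3*u^2 ≤ K^2*t^2 + 2*K*t*u + 4*K*t := by
    have hpa : -(q₁ t * a) ≤ K*t * u := by
      have h1 : -(q₁ t * a) ≤ |q₁ t * a| := neg_le_abs _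
      have h2 : |q₁ t * a| = |q₁ t| * u := by rw [abs_mul, hudef]
      have h3 : |q₁ t| * u ≤ K*t * u := mul_le_mul_of_nonneg_right hp hu0
      linarith
    have hqneg : -(q₂ t) ≤ K*t := by
      have := neg_le_abs (q₂ t); linarith
    have hp2 : (q₁ t)^2 ≤ (K*t)^2 := by
      have := sq_abs (q₁ t)
      nlinarith [abs_nonneg (q₁ t)]
    have hua : a^2 = u^2 := (sq_abs a).symm
    nlinarith [hdisc]
  exact numeric_contradiction K t u ε hK1 ht0 ht1 ht2 hεpos hu0 hA hB
end
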